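/- arXiv:2605.15789 — 5 statements merged into one kernel-verified Lean document; each statement's English description precedes it below -/
import Mathlib

section
/- Let μ be a probability measure on ℝ with finite first moment (∫ |y| dμ(y) < ∞), and let F(x) = μ((-∞, x]) denote its cumulative distribution function. Then for every a ∈ ℝ, the partial first moment satisfies ∫_{(-∞, a]} y dμ(y) = a·F(a) − ∫_{-∞}^{a} F(y) dy, where the integral of F over (−∞, a] is finite. -/
/-!
Counting the set `{(t, y) : y ≤ t ≤ a}` with `volume ⊗ μ` in both orders (Tonelli) gives
`∫_{(-∞, a]} F = ∫ (a - y)⁺ dμ(y) = ∫_{(-∞, a]} (a - y) dμ(y)`, which is finite because `μ` has a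
first moment; splitting the last integral gives `a F(a) - ∫_{(-∞, a]} y dμ(y)`.
-/

open MeasureTheory Set

theorem lintegral_measure_Iic_eq_lintegral_ofReal_sub (μ : Measure ℝ) [SFinite μ] (a : ℝ) :
    ∫⁻ t in Iic a, μ (Iic t) = ∫⁻ y, ENNReal.ofReal (a - y) ∂μ := by
  have hs : MeasurableSet {p : ℝ × ℝ | p.2 ≤ p.1} := measurableSet_le measurable_snd measurable_fst
  calc ∫⁻ t in Iic a, μ (Iic t)
      = (volume.restrict (Iic a)).prod μ {p | p.2 ≤ p.1} := (Measure.prod_apply hs).symm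
    _ = ∫⁻ y, volume.restrict (Iic a) (Ici y) ∂μ := Measure.prod_apply_symm hs
    _ = ∫⁻ y, ENNReal.ofReal (a - y) ∂μ := by
      simp only [Measure.restrict_apply measurableSet_Ici, Ici_inter_Iic, Real.volume_Icc]

theorem lintegral_ofReal_sub_eq_setIntegral (μ : Measure ℝ) [IsFiniteMeasure μ]
    (hint : Integrable (fun y : ℝ => y) μ) (a : ℝ) :
    ∫⁻ y, ENNReal.ofReal (a - y) ∂μ = ENNReal.ofReal (∫ y in Iic a, (a - y) ∂μ) := by
  have hsupp : (fun y => ENNReal.ofReal (a - y)).support ⊆ Iic a := fun y hy =>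
    le_of_lt (by simpa using hy)
  rw [← setLIntegral_eq_of_support_subset hsupp]
  refine (ofReal_integral_eq_lintegral_ofReal ((integrable_const a).sub hint).integrableOn ?_).symm
  filter_upwards [ae_restrict_mem measurableSet_Iic] with y hy using sub_nonneg.2 hy

theorem lintegral_ofReal_measureReal_Iic (μ : Measure ℝ) [IsFiniteMeasure μ]
    (hint : Integrable (fun y : ℝ => y) μ) (a : ℝ) :
    ∫⁻ t in Iic a, ENNReal.ofReal (μ.real (Iic t)) =
      ENNReal.ofReal (∫ y in Iic a, (a - y) ∂μ) := by
  simp only [measureReal_def, ENNReal.ofReal_toReal (measure_ne_top μ _)]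
  rw [lintegral_measure_Iic_eq_lintegral_ofReal_sub, lintegral_ofReal_sub_eq_setIntegral μ hint]

theorem measurable_measureReal_Iic (μ : Measure ℝ) [IsFiniteMeasure μ] :
    Measurable fun t => μ.real (Iic t) :=
  Monotone.measurable fun _ _ hst => measureReal_mono (Iic_subset_Iic.2 hst)

theorem integrableOn_measureReal_Iic (μ : Measure ℝ) [IsFiniteMeasure μ]
    (hint : Integrable (fun y : ℝ => y) μ) (a : ℝ) :
    IntegrableOn (fun t => μ.real (Iic t)) (Iic a) := by
  refine ⟨(measurable_measureReal_Iic μ).aestronglyMeasurable, ?_⟩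
  rw [hasFiniteIntegral_iff_ofReal (.of_forall fun _ => measureReal_nonneg),
    lintegral_ofReal_measureReal_Iic μ hint]
  exact ENNReal.ofReal_lt_top

theorem setIntegral_measureReal_Iic (μ : Measure ℝ) [IsFiniteMeasure μ]
    (hint : Integrable (fun y : ℝ => y) μ) (a : ℝ) :
    ∫ t in Iic a, μ.real (Iic t) = ∫ y in Iic a, (a - y) ∂μ := by
  rw [integral_eq_lintegral_of_nonneg_ae (.of_forall fun _ => measureReal_nonneg)
    (measurable_measureReal_Iic μ).aestronglyMeasurable, lintegral_ofReal_measureReal_Iic μ hint,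
    ENNReal.toReal_ofReal]
  exact setIntegral_nonneg measurableSet_Iic fun y hy => sub_nonneg.2 hy

/-- **Partial first moment identity.**
For a probability measure `μ` on `ℝ` with finite first moment and CDF
`F x = μ((-∞, x])`, we have for every `a`:
`∫_{(-∞, a]} y dμ(y) = a·F(a) − ∫_{-∞}^{a} F(y) dy`,
and the (Lebesgue) integral of `F` over `(-∞, a]` is finite. -/
theorem partial_first_moment
    (μ : Measure ℝ) [IsProbabilityMeasure μ]
    (hint : Integrable (fun y : ℝ => y) μ)
    (F : ℝ → ℝ) (hF : ∀ x, F x = (μ (Set.Iic x)).toReal) :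
    ∀ a : ℝ,
      IntegrableOn F (Set.Iic a) volume ∧
      ∫ y in Set.Iic a, y ∂μ = a * F a - ∫ y in Set.Iic a, F y := by
  intro a
  obtain rfl : F = fun t => μ.real (Iic t) := funext hF
  refine ⟨integrableOn_measureReal_Iic μ hint a, ?_⟩
  rw [setIntegral_measureReal_Iic μ hint,
    integral_sub (integrableOn_const (s := Iic a) (C := a) (measure_ne_top μ _)) hint.integrableOn,
    setIntegral_const, smul_eq_mul]
  ring
end

section
/- Let Y be a real random variable with finite expectation, cumulative distribution function F(x) = P(Y ≤ x), and let τ ∈ (0, 1). If F is continuous at a point θ ∈ ℝ, then the function J(θ) = E[ρ_τ(Y − θ)], where ρ_τ is the pinball loss at level τ, is differentiable at θ with derivative J'(θ) = F(θ) − τ. -/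
open MeasureTheory

/-- The pinball (quantile regression) loss at level `τ`:
`ρ_τ(ε) = ε·(τ − 1_{ε < 0})`. -/
noncomputable def pinball (τ ε : ℝ) : ℝ := ε * (τ - if ε < 0 then 1 else 0)

/-!
Pushing `P` forward along `Y` reduces everything to a finite measure `ν` on `ℝ`. The
pinball loss is Lipschitz and, away from `0`, locally linear with slope `τ - 1_{ε < 0}`;
so `t ↦ pinball τ (y - t)` has derivative `1_{y < θ} - τ` at `θ` for every `y ≠ θ`, with
a uniform Lipschitz bound. Continuity of the CDF at `θ` says that `ν` has no atom at `θ`,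
so this holds `ν`-a.e., and differentiating under the integral gives
`ν(Iio θ) - τ = F θ - τ`.
-/

open Filter Topology Set ProbabilityTheory NNReal

lemma pinball_eq_mul_add_max (τ ε : ℝ) : pinball τ ε = τ * ε + max (-ε) 0 := by
  rcases lt_or_ge ε 0 with h | h
  · simp [pinball, h, max_eq_left (neg_nonneg.mpr h.le)]; ring
  · simp [pinball, not_lt.mpr h, max_eq_right (neg_nonpos.mpr h)]; ring

lemma lipschitzWith_pinball (τ : ℝ) : LipschitzWith (‖τ‖₊ + 1) (pinball τ) := by
  have := (lipschitzWith_smul τ).add (LipschitzWith.id.neg.max_const 0)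
  simpa [funext (pinball_eq_mul_add_max τ)] using this

@[fun_prop]
lemma continuous_pinball (τ : ℝ) : Continuous (pinball τ) :=
  (lipschitzWith_pinball τ).continuous

lemma hasDerivAt_pinball (τ : ℝ) {ε : ℝ} (hε : ε ≠ 0) :
    HasDerivAt (pinball τ) (τ - if ε < 0 then 1 else 0) ε := by
  have hsign : ∀ᶠ e in 𝓝 ε, (e < 0 ↔ ε < 0) := by
    rcases hε.lt_or_gt with h | h
    · filter_upwards [eventually_lt_nhds h] with e he using by simp [he, h]
    · filter_upwards [eventually_gt_nhds h] with e he using by simp [he.not_gt, h.not_gt]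
  refine (hasDerivAt_mul_const _).congr_of_eventuallyEq ?_
  filter_upwards [hsign] with e he
  simp only [pinball, he]

lemma hasDerivAt_pinball_sub (τ : ℝ) {y θ : ℝ} (h : y ≠ θ) :
    HasDerivAt (fun t => pinball τ (y - t)) ((Iio θ).indicator 1 y - τ) θ := by
  refine ((hasDerivAt_pinball τ (sub_ne_zero.mpr h)).comp θ
    ((hasDerivAt_id θ).const_sub y)).congr_deriv ?_
  by_cases hy : y < θ <;> simp [hy]

lemma measure_singleton_eq_zero_of_continuousAt_cdf {ν : Measure ℝ} [IsProbabilityMeasure ν]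
    {θ : ℝ} (h : ContinuousAt (cdf ν) θ) : ν {θ} = 0 := by
  rw [← measure_cdf ν, StieltjesFunction.measure_singleton, h.continuousWithinAt.leftLim_eq,
    sub_self, ENNReal.ofReal_zero]

theorem hasDerivAt_integral_pinball_sub {ν : Measure ℝ} [IsFiniteMeasure ν]
    (hν : Integrable (fun y => y) ν) (τ : ℝ) {θ : ℝ} (hθ : ν {θ} = 0) :
    HasDerivAt (fun t => ∫ y, pinball τ (y - t) ∂ν) (ν.real (Iic θ) - ν.real univ * τ) θ := by
  have hint : Integrable (fun y => pinball τ (y - θ)) ν := by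
    simp only [pinball_eq_mul_add_max, neg_sub]
    exact ((hν.sub (integrable_const θ)).const_mul τ).add
      ((integrable_const θ).sub hν).pos_part
  have hind : Integrable ((Iio θ).indicator (1 : ℝ → ℝ)) ν :=
    (integrable_const 1).indicator measurableSet_Iio
  have hlip : ∀ᵐ y ∂ν,
      LipschitzOnWith (Real.nnabs (‖τ‖₊ + 1 : ℝ≥0)) (fun t => pinball τ (y - t)) univ := by
    refine ae_of_all _ fun y => ?_
    rw [Real.nnabs_coe, ← mul_one (‖τ‖₊ + 1)]
    exact ((lipschitzWith_pinball τ).comp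
      (IsometryEquiv.subLeft y).isometry.lipschitz).lipschitzOnWith
  have hdiff : ∀ᵐ y ∂ν,
      HasDerivAt (fun t => pinball τ (y - t)) ((Iio θ).indicator 1 y - τ) θ := by
    filter_upwards [compl_mem_ae_iff.mpr hθ] with y hy using hasDerivAt_pinball_sub τ hy
  obtain ⟨-, hderiv⟩ := hasDerivAt_integral_of_dominated_loc_of_lip
    (F := fun t y => pinball τ (y - t)) (F' := fun y => (Iio θ).indicator 1 y - τ)
    univ_mem
    (Eventually.of_forall fun t =>
      (continuous_pinball τ).comp_aestronglyMeasurable (hν.1.sub aestronglyMeasurable_const))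
    hint (hind.sub (integrable_const τ)).1 hlip (integrable_const _) hdiff
  refine hderiv.congr_deriv ?_
  rw [integral_sub hind (integrable_const τ), integral_indicator_one measurableSet_Iio,
    integral_const, measureReal_congr (Iio_ae_eq_Iic' hθ), smul_eq_mul]

theorem expected_pinball_hasDerivAt_general
    {Ω : Type*} [MeasurableSpace Ω] (P : Measure Ω) [IsProbabilityMeasure P]
    (Y : Ω → ℝ) (hY : Integrable Y P)
    (F : ℝ → ℝ) (hF : ∀ x, F x = (P {ω | Y ω ≤ x}).toReal)
    (τ : ℝ)
    (J : ℝ → ℝ) (hJ : ∀ θ, J θ = ∫ ω, pinball τ (Y ω - θ) ∂P)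
    (θ : ℝ) (hcont : ContinuousAt F θ) :
    HasDerivAt J (F θ - τ) θ := by
  have hYm : AEMeasurable Y P := hY.aemeasurable
  set ν := P.map Y
  have : IsProbabilityMeasure ν := Measure.isProbabilityMeasure_map hYm
  have hFν : F = cdf ν := funext fun x => by
    rw [hF, cdf_eq_real, map_measureReal_apply_of_aemeasurable hYm measurableSet_Iic]; rfl
  have hJν : J = fun t => ∫ y, pinball τ (y - t) ∂ν := funext fun t => by
    rw [hJ, integral_map hYm (by fun_prop)]
  have hν : Integrable (fun y => y) ν :=
    (integrable_map_measure aestronglyMeasurable_id hYm).mpr hY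
  have hatom : ν {θ} = 0 := measure_singleton_eq_zero_of_continuousAt_cdf (hFν ▸ hcont)
  simpa [hJν, hFν, cdf_eq_real] using hasDerivAt_integral_pinball_sub hν τ hatom

/-- **Derivative of the expected pinball loss.**
For an integrable real random variable `Y` with CDF `F` and `τ ∈ (0,1)`,
if `F` is continuous at `θ`, then `J(θ) = E[ρ_τ(Y − θ)]` is differentiable
at `θ` with derivative `J'(θ) = F(θ) − τ`. -/
theorem expected_pinball_hasDerivAt
    {Ω : Type*} [MeasurableSpace Ω] (P : Measure Ω) [IsProbabilityMeasure P]
    (Y : Ω → ℝ) (hY : Integrable Y P)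
    (F : ℝ → ℝ) (hF : ∀ x, F x = (P {ω | Y ω ≤ x}).toReal)
    (τ : ℝ) (hτ : τ ∈ Set.Ioo (0 : ℝ) 1)
    (J : ℝ → ℝ) (hJ : ∀ θ, J θ = ∫ ω, pinball τ (Y ω - θ) ∂P)
    (θ : ℝ) (hcont : ContinuousAt F θ) :
    HasDerivAt J (F θ - τ) θ :=
  expected_pinball_hasDerivAt_general P Y hY F hF τ J hJ θ hcont
end

section
/- Let n ≥ 1, let μ_1, …, μ_n and ν_1, …, ν_n be probability measures on ℝ, and let ε_1, …, ε_n ≥ 0. If μ_i((-∞, x]) ≤ (1 + ε_i)·ν_i((-∞, x]) for every x ∈ ℝ and every i, then the n-fold convolutions satisfy (μ_1 ∗ μ_2 ∗ ⋯ ∗ μ_n)((-∞, x]) ≤ (∏_{i=1}^n (1 + ε_i))·(ν_1 ∗ ν_2 ∗ ⋯ ∗ ν_n)((-∞, x]) for every x ∈ ℝ; i.e., per-source excess-mass CDF overbounds compose multiplicatively under convolution of n independent error sources. -/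
/-!
Writing `(μ ∗ ρ)((-∞, x]) = ∫ ρ((-∞, x - a]) dμ(a)` shows that a CDF bound
`F_ρ ≤ c F_ρ'` survives convolution with any `μ`; by commutativity of convolution the same
holds in the other factor. Two such bounds therefore compose to `F_{μ ∗ ρ} ≤ c d F_{ν ∗ ρ'}`,
and induction on the number of factors multiplies the constants.
-/

open MeasureTheory
open scoped ENNReal

/-- The convolution `μ₁ ∗ μ₂ ∗ ⋯ ∗ μ_n` of a finite list of measures on `ℝ`
(the law of the sum of independent random variables with the given laws);
the empty convolution is the Dirac mass at `0`. -/
noncomputable def convList : List (Measure ℝ) → Measure ℝ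
  | [] => Measure.dirac 0
  | m :: ms => Measure.conv m (convList ms)

lemma ENNReal.toReal_le_mul_toReal_iff {a b : ℝ≥0∞} {c : ℝ} (ha : a ≠ ∞) (hb : b ≠ ∞)
    (hc : 0 ≤ c) : a.toReal ≤ c * b.toReal ↔ a ≤ ENNReal.ofReal c * b := by
  rw [← ENNReal.le_ofReal_iff_toReal_le ha (by positivity), ENNReal.ofReal_mul hc,
    ENNReal.ofReal_toReal hb]

namespace MeasureTheory.Measure

open Set

lemma conv_apply_Iic (μ ν : Measure ℝ) [SFinite ν] (x : ℝ) :
    (μ ∗ ν) (Iic x) = ∫⁻ a, ν (Iic (x - a)) ∂μ := by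
  rw [Measure.conv, map_apply (by fun_prop) measurableSet_Iic,
    prod_apply (measurable_add measurableSet_Iic)]
  congr with a
  congr with b
  simp [le_sub_iff_add_le']

variable {μ ν ρ ρ' : Measure ℝ} {c d : ℝ≥0∞}

lemma conv_Iic_le_mul_conv_right [SFinite ρ] [SFinite ρ'] (h : ∀ t, ρ (Iic t) ≤ c * ρ' (Iic t))
    (x : ℝ) : (μ ∗ ρ) (Iic x) ≤ c * (μ ∗ ρ') (Iic x) := by
  have hmeas : Measurable fun a ↦ ρ' (Iic (x - a)) :=
    Antitone.measurable fun a b hab ↦ measure_mono (Iic_subset_Iic.2 (by linarith))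
  rw [conv_apply_Iic, conv_apply_Iic, ← lintegral_const_mul c hmeas]
  exact lintegral_mono fun a ↦ h _

lemma conv_Iic_le_mul_conv_left [SFinite μ] [SFinite ν] [SFinite ρ]
    (h : ∀ t, μ (Iic t) ≤ c * ν (Iic t)) (x : ℝ) :
    (μ ∗ ρ) (Iic x) ≤ c * (ν ∗ ρ) (Iic x) := by
  rw [conv_comm μ ρ, conv_comm ν ρ]
  exact conv_Iic_le_mul_conv_right h x

lemma conv_Iic_le_mul_mul_conv [SFinite μ] [SFinite ν] [SFinite ρ] [SFinite ρ']
    (hμν : ∀ t, μ (Iic t) ≤ c * ν (Iic t)) (hρρ' : ∀ t, ρ (Iic t) ≤ d * ρ' (Iic t)) (x : ℝ) :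
    (μ ∗ ρ) (Iic x) ≤ c * d * (ν ∗ ρ') (Iic x) :=
  calc (μ ∗ ρ) (Iic x) ≤ c * (ν ∗ ρ) (Iic x) := conv_Iic_le_mul_conv_left hμν x
    _ ≤ c * (d * (ν ∗ ρ') (Iic x)) := by gcongr; exact conv_Iic_le_mul_conv_right hρρ' x
    _ = c * d * (ν ∗ ρ') (Iic x) := (mul_assoc _ _ _).symm

end MeasureTheory.Measure

instance sFinite_convList_ofFn :
    ∀ {n : ℕ} (μs : Fin n → Measure ℝ) [∀ i, SFinite (μs i)], SFinite (convList (List.ofFn μs))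
  | 0, _, _ => inferInstanceAs (SFinite (Measure.dirac (0 : ℝ)))
  | _ + 1, μs, _ => by
    have := sFinite_convList_ofFn fun i ↦ μs i.succ
    rw [List.ofFn_succ, convList]
    infer_instance

instance isFiniteMeasure_convList_ofFn :
    ∀ {n : ℕ} (μs : Fin n → Measure ℝ) [∀ i, IsFiniteMeasure (μs i)],
      IsFiniteMeasure (convList (List.ofFn μs))
  | 0, _, _ => inferInstanceAs (IsFiniteMeasure (Measure.dirac (0 : ℝ)))
  | _ + 1, μs, _ => by
    have := isFiniteMeasure_convList_ofFn fun i ↦ μs i.succ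
    rw [List.ofFn_succ, convList]
    infer_instance

theorem convList_ofFn_Iic_le_prod_mul {n : ℕ} (μs νs : Fin n → Measure ℝ)
    [∀ i, SFinite (μs i)] [∀ i, SFinite (νs i)] (c : Fin n → ℝ≥0∞)
    (h : ∀ i t, μs i (Set.Iic t) ≤ c i * νs i (Set.Iic t)) (x : ℝ) :
    convList (List.ofFn μs) (Set.Iic x) ≤ (∏ i, c i) * convList (List.ofFn νs) (Set.Iic x) := by
  induction n generalizing x with
  | zero => simp
  | succ n ih =>
    rw [List.ofFn_succ, List.ofFn_succ, convList, convList, Fin.prod_univ_succ]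
    exact Measure.conv_Iic_le_mul_mul_conv (h 0)
      (ih (fun i ↦ μs i.succ) (fun i ↦ νs i.succ) (fun i ↦ c i.succ) fun i ↦ h i.succ) x

theorem excess_mass_overbounds_compose_under_convolution_general
    (n : ℕ)
    (μs νs : Fin n → Measure ℝ)
    (hμ : ∀ i, IsProbabilityMeasure (μs i))
    (hν : ∀ i, IsProbabilityMeasure (νs i))
    (ε : Fin n → ℝ) (hε : ∀ i, 0 ≤ ε i)
    (hbound : ∀ i, ∀ x : ℝ,
      ((μs i) (Set.Iic x)).toReal ≤ (1 + ε i) * ((νs i) (Set.Iic x)).toReal) :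
    ∀ x : ℝ,
      ((convList (List.ofFn μs)) (Set.Iic x)).toReal ≤
        (∏ i, (1 + ε i)) * ((convList (List.ofFn νs)) (Set.Iic x)).toReal := by
  intro x
  have hpos : ∀ i, 0 ≤ 1 + ε i := fun i ↦ by linarith [hε i]
  have hbound' (i : Fin n) (t : ℝ) :
      μs i (Set.Iic t) ≤ ENNReal.ofReal (1 + ε i) * νs i (Set.Iic t) :=
    (ENNReal.toReal_le_mul_toReal_iff (measure_ne_top _ _) (measure_ne_top _ _) (hpos i)).1
      (hbound i t)
  rw [ENNReal.toReal_le_mul_toReal_iff (measure_ne_top _ _) (measure_ne_top _ _)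
    (Finset.prod_nonneg fun i _ ↦ hpos i),
    ENNReal.ofReal_prod_of_nonneg fun i _ ↦ hpos i]
  exact convList_ofFn_Iic_le_prod_mul μs νs _ hbound' x

/-- **Multiplicative composition of per-source excess-mass CDF overbounds
under convolution.**
If `μ_i((-∞, x]) ≤ (1 + ε_i)·ν_i((-∞, x])` for all `x` and all `i`, then
`(μ₁ ∗ ⋯ ∗ μ_n)((-∞, x]) ≤ (∏ i, (1 + ε_i))·(ν₁ ∗ ⋯ ∗ ν_n)((-∞, x])`
for all `x`. -/
theorem excess_mass_overbounds_compose_under_convolution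
    (n : ℕ) (hn : 1 ≤ n)
    (μs νs : Fin n → Measure ℝ)
    (hμ : ∀ i, IsProbabilityMeasure (μs i))
    (hν : ∀ i, IsProbabilityMeasure (νs i))
    (ε : Fin n → ℝ) (hε : ∀ i, 0 ≤ ε i)
    (hbound : ∀ i, ∀ x : ℝ,
      ((μs i) (Set.Iic x)).toReal ≤ (1 + ε i) * ((νs i) (Set.Iic x)).toReal) :
    ∀ x : ℝ,
      ((convList (List.ofFn μs)) (Set.Iic x)).toReal ≤
        (∏ i, (1 + ε i)) * ((convList (List.ofFn νs)) (Set.Iic x)).toReal :=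
  excess_mass_overbounds_compose_under_convolution_general n μs νs hμ hν ε hε hbound
end

section
/- Let Φ denote the standard Gaussian CDF, let m ∈ ℝ, σ > 0, ε ≥ 0, and n ≥ 1. Let μ be a probability measure on ℝ satisfying the left-tail excess-mass Gaussian overbound μ((-∞, x]) ≤ (1 + ε)·Φ((x − m)/σ) for every x ∈ ℝ. Then the n-fold convolution μ^{∗n} (the law of the sum of n i.i.d. copies) satisfies μ^{∗n}((-∞, x]) ≤ (1 + ε)^n · Φ((x − n·m)/(√n·σ)) for every x ∈ ℝ. Equivalently, for the average of n i.i.d. copies, P(mean ≤ t) ≤ (1 + ε)^n · Φ(√n·(t − m)/σ), which is the basis of the protection-level formula PL = Q^{-1}(IR/(1+ε)^n)·σ/√n + m. -/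
open MeasureTheory

/-- The standard Gaussian cumulative distribution function
`Φ(z) = ∫_{-∞}^{z} e^{−t²/2}/√(2π) dt`. -/
noncomputable def stdGaussianCDF (z : ℝ) : ℝ :=
  ∫ t in Set.Iic z, Real.exp (-(t ^ 2) / 2) / Real.sqrt (2 * Real.pi)

/-- The `n`-fold convolution `μ^{∗n}` of a measure `μ` on `ℝ`
(the law of the sum of `n` i.i.d. copies); `μ^{∗0}` is the Dirac mass at `0`. -/
noncomputable def convPow (μ : Measure ℝ) : ℕ → Measure ℝ
  | 0 => Measure.dirac 0
  | n + 1 => Measure.conv μ (convPow μ n)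

/-!
A domination of distribution functions `μ (Iic x) ≤ c * ν (Iic x)` survives convolution with any
measure `ρ`, since `(ρ ∗ μ) (Iic x) = ∫ μ (Iic (x - a)) dρ(a)` and the bound holds at every shifted
point. Applying this to each factor in turn gives `μ^{∗n} (Iic x) ≤ c ^ n * ν^{∗n} (Iic x)`. For
`ν = 𝒩(m, σ²)` the convolution power is `𝒩(n m, n σ²)`, whose distribution function is
`Φ((x - n m) / (√n σ))`.
-/

open ProbabilityTheory Set
open scoped NNReal ENNReal

instance sFinite_convPow (μ : Measure ℝ) [SFinite μ] : ∀ n, SFinite (convPow μ n)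
  | 0 => inferInstanceAs (SFinite (Measure.dirac 0))
  | n + 1 => have := sFinite_convPow μ n; inferInstanceAs (SFinite (μ ∗ convPow μ n))

lemma conv_apply_Iic (μ ν : Measure ℝ) [SFinite ν] (x : ℝ) :
    (μ ∗ ν) (Iic x) = ∫⁻ a, ν (Iic (x - a)) ∂μ := by
  rw [Measure.conv, Measure.map_apply measurable_add measurableSet_Iic,
    Measure.prod_apply (measurable_add measurableSet_Iic)]
  congr! with a
  ext b
  simp [le_sub_iff_add_le']

lemma conv_Iic_le_of_Iic_le {μ ν ν' : Measure ℝ} [SFinite ν] [SFinite ν'] {c : ℝ≥0∞}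
    (h : ∀ x, ν (Iic x) ≤ c * ν' (Iic x)) (x : ℝ) :
    (μ ∗ ν) (Iic x) ≤ c * (μ ∗ ν') (Iic x) := by
  have h_anti : Antitone fun a ↦ ν' (Iic (x - a)) :=
    fun a b hab ↦ measure_mono (Iic_subset_Iic.2 (by linarith))
  rw [conv_apply_Iic, conv_apply_Iic, ← lintegral_const_mul _ h_anti.measurable]
  exact lintegral_mono fun a ↦ h (x - a)

lemma convPow_Iic_le_pow_mul {μ ν : Measure ℝ} [SFinite μ] [SFinite ν] {c : ℝ≥0∞}
    (h : ∀ x, μ (Iic x) ≤ c * ν (Iic x)) (n : ℕ) (x : ℝ) :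
    convPow μ n (Iic x) ≤ c ^ n * convPow ν n (Iic x) := by
  induction n generalizing x with
  | zero => simp [convPow]
  | succ n ih =>
    calc convPow μ (n + 1) (Iic x)
        ≤ c ^ n * (μ ∗ convPow ν n) (Iic x) := conv_Iic_le_of_Iic_le ih x
      _ = c ^ n * (convPow ν n ∗ μ) (Iic x) := by rw [Measure.conv_comm]
      _ ≤ c ^ n * (c * (convPow ν n ∗ ν) (Iic x)) := by gcongr; exact conv_Iic_le_of_Iic_le h x
      _ = c ^ (n + 1) * convPow ν (n + 1) (Iic x) := by
        rw [convPow, Measure.conv_comm, pow_succ, mul_assoc]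

lemma convPow_gaussianReal (m : ℝ) (v : ℝ≥0) (n : ℕ) :
    convPow (gaussianReal m v) n = gaussianReal (n * m) (n * v) := by
  induction n with
  | zero => simp [convPow, gaussianReal_zero_var]
  | succ n ih =>
    rw [convPow, ih, gaussianReal_conv_gaussianReal]
    congr 1 <;> push_cast <;> ring

lemma stdGaussianCDF_nonneg (z : ℝ) : 0 ≤ stdGaussianCDF z :=
  setIntegral_nonneg measurableSet_Iic fun _ _ ↦ by positivity

lemma gaussianReal_zero_one_Iic (z : ℝ) :
    gaussianReal 0 1 (Iic z) = ENNReal.ofReal (stdGaussianCDF z) := by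
  rw [gaussianReal_apply_eq_integral 0 one_ne_zero, stdGaussianCDF]
  congr! 3 with t
  simp [gaussianPDFReal, div_eq_inv_mul]

lemma gaussianReal_Iic (m : ℝ) {v : ℝ≥0} (hv : v ≠ 0) (x : ℝ) :
    gaussianReal m v (Iic x) = ENNReal.ofReal (stdGaussianCDF ((x - m) / √v)) := by
  have hs : 0 < √(v : ℝ) := Real.sqrt_pos.2 (by positivity)
  have h_affine : (gaussianReal 0 1).map (fun z ↦ √v * z + m) = gaussianReal m v := by
    change ((gaussianReal 0 1).map ((· + m) ∘ (√v * ·))) = _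
    rw [← Measure.map_map (measurable_add_const m) (measurable_const_mul _),
      gaussianReal_map_const_mul, gaussianReal_map_add_const]
    congr 1
    · ring
    · ext; simp
  have h_preimage : (fun z ↦ √v * z + m) ⁻¹' Iic x = Iic ((x - m) / √v) := by
    ext z
    simp [le_div_iff₀ hs, mul_comm z, le_sub_iff_add_le]
  rw [← h_affine, Measure.map_apply (by fun_prop) measurableSet_Iic, h_preimage,
    gaussianReal_zero_one_Iic]

/-- **Excess-mass Gaussian overbound of the n-fold convolution.**
If `μ((-∞, x]) ≤ (1 + ε)·Φ((x − m)/σ)` for all `x`, then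
`μ^{∗n}((-∞, x]) ≤ (1 + ε)^n·Φ((x − n·m)/(√n·σ))` for all `x`; equivalently,
for the average of `n` i.i.d. copies,
`P(mean ≤ t) ≤ (1 + ε)^n·Φ(√n·(t − m)/σ)`. -/
theorem convPow_gaussian_overbound
    (m σ ε : ℝ) (hσ : 0 < σ) (hε : 0 ≤ ε) (n : ℕ) (hn : 1 ≤ n)
    (μ : Measure ℝ) [IsProbabilityMeasure μ]
    (hbound : ∀ x : ℝ, (μ (Set.Iic x)).toReal ≤ (1 + ε) * stdGaussianCDF ((x - m) / σ)) :
    (∀ x : ℝ,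
      ((convPow μ n) (Set.Iic x)).toReal ≤
        (1 + ε) ^ n * stdGaussianCDF ((x - n * m) / (Real.sqrt n * σ))) ∧
    (∀ t : ℝ,
      ((convPow μ n) (Set.Iic (n * t))).toReal ≤
        (1 + ε) ^ n * stdGaussianCDF (Real.sqrt n * (t - m) / σ)) := by
  set V : ℝ≥0 := ⟨σ ^ 2, sq_nonneg σ⟩
  have hV_coe : (V : ℝ) = σ ^ 2 := rfl
  have hV : V ≠ 0 := by rw [← NNReal.coe_ne_zero, hV_coe]; positivity
  have h_one_add : 0 ≤ 1 + ε := by linarith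
  have h_base (x : ℝ) : μ (Iic x) ≤ ENNReal.ofReal (1 + ε) * gaussianReal m V (Iic x) := by
    rw [gaussianReal_Iic m hV, hV_coe, Real.sqrt_sq hσ.le, ← ENNReal.ofReal_mul h_one_add,
      ← ENNReal.ofReal_toReal (measure_ne_top μ _)]
    exact ENNReal.ofReal_le_ofReal (hbound x)
  have hn_pos : (0 : ℝ) < n := by exact_mod_cast hn
  have h_sqrt : √((n * V : ℝ≥0) : ℝ) = √n * σ := by
    rw [NNReal.coe_mul, hV_coe, NNReal.coe_natCast, Real.sqrt_mul hn_pos.le, Real.sqrt_sq hσ.le]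
  have h_sum (x : ℝ) : ((convPow μ n) (Set.Iic x)).toReal ≤
      (1 + ε) ^ n * stdGaussianCDF ((x - n * m) / (Real.sqrt n * σ)) := by
    have h := convPow_Iic_le_pow_mul h_base n x
    rw [convPow_gaussianReal, gaussianReal_Iic _ (mul_ne_zero (by positivity) hV), h_sqrt,
      ← ENNReal.ofReal_pow h_one_add, ← ENNReal.ofReal_mul (by positivity)] at h
    exact ENNReal.toReal_le_of_le_ofReal
      (mul_nonneg (by positivity) (stdGaussianCDF_nonneg _)) h
  refine ⟨h_sum, fun t ↦ ?_⟩
  have h_arg : ((n : ℝ) * t - n * m) / (√n * σ) = √n * (t - m) / σ := by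
    field_simp
    rw [Real.sq_sqrt hn_pos.le]
    ring
  simpa [h_arg] using h_sum (n * t)
end

section
/- Let F_a, F_L, F_R : ℝ → [0, 1] be cumulative distribution functions and let ε ≥ 0 satisfy the relaxed paired overbounding conditions F_a(x) ≤ (1 + ε)·F_L(x) and 1 − F_a(x) ≤ (1 + ε)·(1 − F_R(x)) for every x ∈ ℝ. Define the combined overbounding function F_oa by F_oa(x) = (1 + ε)·F_L(x) if (1 + ε)·F_L(x) < 1/2, F_oa(x) = (1 + ε)·F_R(x) − ε if (1 + ε)·F_R(x) − ε > 1/2, and F_oa(x) = 1/2 otherwise. Then (i) the two non-middle branches cannot both hold at the same x, so F_oa is well defined; and (ii) F_oa is conservative in the overbounding sense: F_oa(x) ≥ F_a(x) at every x with F_a(x) ≤ 1/2, and F_oa(x) ≤ F_a(x) at every x with F_a(x) ≥ 1/2. -/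
open Classical

/-- **Well-definedness and conservatism of the combined paired overbound.**
Given CDFs `F_a, F_L, F_R : ℝ → [0,1]` and `ε ≥ 0` satisfying the relaxed
paired overbounding conditions `F_a ≤ (1+ε)·F_L` and `1 − F_a ≤ (1+ε)·(1 − F_R)`,
the combined overbounding function
`F_oa(x) = (1+ε)·F_L(x)` if `(1+ε)·F_L(x) < 1/2`,
`F_oa(x) = (1+ε)·F_R(x) − ε` if `(1+ε)·F_R(x) − ε > 1/2`, and `1/2` otherwise,
is well defined (the two non-middle branches are mutually exclusive) and
conservative: `F_oa ≥ F_a` wherever `F_a ≤ 1/2`, and `F_oa ≤ F_a` wherever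
`F_a ≥ 1/2`. -/
theorem combined_paired_overbound_conservative
    (Fa FL FR : ℝ → ℝ) (ε : ℝ) (hε : 0 ≤ ε)
    (hFa01 : ∀ x, Fa x ∈ Set.Icc (0 : ℝ) 1)
    (hFL01 : ∀ x, FL x ∈ Set.Icc (0 : ℝ) 1)
    (hFR01 : ∀ x, FR x ∈ Set.Icc (0 : ℝ) 1)
    (hFaMono : Monotone Fa) (hFLMono : Monotone FL) (hFRMono : Monotone FR)
    (hL : ∀ x, Fa x ≤ (1 + ε) * FL x)
    (hR : ∀ x, 1 - Fa x ≤ (1 + ε) * (1 - FR x))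
    (Foa : ℝ → ℝ)
    (hFoa : ∀ x, Foa x =
      if (1 + ε) * FL x < 1 / 2 then (1 + ε) * FL x
      else if 1 / 2 < (1 + ε) * FR x - ε then (1 + ε) * FR x - ε
      else 1 / 2) :
    (∀ x, ¬((1 + ε) * FL x < 1 / 2 ∧ 1 / 2 < (1 + ε) * FR x - ε)) ∧
    (∀ x, Fa x ≤ 1 / 2 → Fa x ≤ Foa x) ∧
    (∀ x, 1 / 2 ≤ Fa x → Foa x ≤ Fa x) := by
  have hR' : ∀ x, (1 + ε) * FR x - ε ≤ Fa x := by
    intro x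
    have := hR x
    nlinarith [this]
  refine ⟨fun x ⟨h1, h2⟩ => ?_, fun x hx => ?_, fun x hx => ?_⟩
  · have := hL x
    have := hR' x
    linarith
  · rw [hFoa x]
    split_ifs with h1 h2
    · exact hL x
    · linarith [hR' x]
    · linarith
  · rw [hFoa x]
    split_ifs with h1 h2
    · linarith [hL x]
    · exact hR' x
    · linarith
end
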